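/- arXiv:1510.05615 — 2 statements merged into one kernel-verified Lean document; each statement's English description precedes it below -/
import Mathlib

section
/- Let H, H* be closed subgroups of a group G such that the product map H* × H → G, (h*, h) ↦ h*·h, is bijective. Then the map H → (G × G)/(H* × H × H*) sending h to the orbit of (1, h), where (h₁*, k, h₂*)·(g₁, g₂) = (k g₁ (h₁*)⁻¹, k g₂ (h₂*)⁻¹), is a bijection. -/
/-- The orbit relation on `G × G` for the action of `H* × H × H*`:
`(h₁*, k, h₂*)·(g₁, g₂) = (k g₁ (h₁*)⁻¹, k g₂ (h₂*)⁻¹)`. -/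
def rel2 {G : Type*} [Group G] (H Hs : Subgroup G) : G × G → G × G → Prop :=
  fun x y => ∃ (h₁ : Hs) (k : H) (h₂ : Hs),
    y = ((k : G) * x.1 * (h₁ : G)⁻¹, (k : G) * x.2 * (h₂ : G)⁻¹)

/-- let `H, H*` be subgroups of a group `G` such that the
product map `H* × H → G`, `(h*, h) ↦ h*·h` is bijective.  Then the orbit
relation above is an equivalence relation, and the map
`H → (G × G)/(H* × H × H*)` sending `h` to the orbit of `(1, h)` is a
bijection. -/
theorem poisson_group_moduli_bijection
    {G : Type*} [Group G] (H Hs : Subgroup G)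
    (hfact : Function.Bijective (fun p : Hs × H => (p.1 : G) * (p.2 : G))) :
    Equivalence (rel2 H Hs) ∧
      Function.Bijective
        (fun h : H => Quot.mk (rel2 H Hs) ((1 : G), (h : G))) := by
  have triv : ∀ g : G, g ∈ Hs → g ∈ H → g = 1 := by
    intro g hgs hgh
    have h := hfact.injective (a₁ := (⟨g, hgs⟩, ⟨g⁻¹, inv_mem hgh⟩))
      (a₂ := (1, 1)) (by simp)
    simpa using congrArg (fun p : Hs × H => (p.1 : G)) h
  have heqv : Equivalence (rel2 H Hs) := by
    constructor
    · intro x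
      exact ⟨1, 1, 1, by simp⟩
    · rintro x y ⟨h₁, k, h₂, rfl⟩
      refine ⟨h₁⁻¹, k⁻¹, h₂⁻¹, ?_⟩
      simp [mul_assoc]
    · rintro x y z ⟨h₁, k, h₂, rfl⟩ ⟨h₁', k', h₂', rfl⟩
      refine ⟨h₁' * h₁, k' * k, h₂' * h₂, ?_⟩
      simp [mul_assoc]
  refine ⟨heqv, ?_, ?_⟩
  · intro h h' hq
    have hrel : rel2 H Hs ((1 : G), (h : G)) ((1 : G), (h' : G)) :=
      (Equivalence.eqvGen_iff heqv).mp (Quot.eqvGen_exact hq)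
    obtain ⟨h₁, k, h₂, he⟩ := hrel
    obtain ⟨e1, e2⟩ := Prod.mk.injEq .. ▸ he
    -- e1 : 1 = k * 1 * h₁⁻¹, e2 : h' = k * h * h₂⁻¹
    have hk : (k : G) = (h₁ : G) := by
      have := e1.symm
      rw [mul_one] at this
      exact (mul_inv_eq_one.mp this)
    have hk1 : (k : G) = 1 := triv _ (hk ▸ h₁.2) k.2
    have e2' : (h' : G) = (h : G) * (h₂ : G)⁻¹ := by
      rw [e2, hk, ← hk, hk1, one_mul]
    have hh2 : (h₂ : G) = 1 := by
      apply triv _ h₂.2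
      have : (h₂ : G) = (h' : G)⁻¹ * (h : G) := by
        rw [e2']; group
      rw [this]; exact mul_mem (inv_mem h'.2) h.2
    apply Subtype.ext
    rw [e2', hh2, inv_one, mul_one]
  · intro q
    obtain ⟨⟨g₁, g₂⟩, rfl⟩ := Quot.exists_rep q
    obtain ⟨⟨b₁, b₂⟩, hb⟩ := hfact.surjective g₁⁻¹
    simp only at hb
    obtain ⟨⟨c₁, c₂⟩, hc⟩ := hfact.surjective (((b₂ : G) * g₂)⁻¹)
    simp only at hc
    refine ⟨c₂⁻¹, Quot.sound ⟨b₁, b₂⁻¹, c₁, ?_⟩⟩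
    have hg₁ : (b₂ : G)⁻¹ * (b₁ : G)⁻¹ = g₁ := by
      rw [← mul_inv_rev, hb, inv_inv]
    have hg₂ : (b₂ : G)⁻¹ * ((c₂ : G)⁻¹ * (c₁ : G)⁻¹) = g₂ := by
      rw [← mul_inv_rev, hc, inv_inv, inv_mul_cancel_left]
    refine Prod.ext ?_ ?_
    · simpa [mul_assoc] using hg₁.symm
    · simpa [mul_assoc] using hg₂.symm
end

section
/- Under the same unique-factorization hypothesis G = H*·H, the map (h₁, h₂) ↦ orbit of (1, h₁, h₁h₂) gives a bijection H × H ≅ (G × G × G)/(H × H* × H* × H*), where H acts diagonally by left multiplication and each H* factor acts by right multiplication on the corresponding G factor (inverted). -/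
/-- The orbit relation on `G × G × G` for the action of `H × H* × H* × H*`:
`(k, h₀*, h₁*, h₂*)·(g₀,g₁,g₂) = (k g₀ (h₀*)⁻¹, k g₁ (h₁*)⁻¹, k g₂ (h₂*)⁻¹)`. -/
def rel3 {G : Type*} [Group G] (H Hs : Subgroup G) :
    G × G × G → G × G × G → Prop :=
  fun x y => ∃ (k : H) (h₀ h₁ h₂ : Hs),
    y = ((k : G) * x.1 * (h₀ : G)⁻¹,
         (k : G) * x.2.1 * (h₁ : G)⁻¹,
         (k : G) * x.2.2 * (h₂ : G)⁻¹)

/-- under the unique-factorization hypothesis `G = H*·H`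
(the product map `H* × H → G` is bijective), the map
`(h₁, h₂) ↦ orbit of (1, h₁, h₁h₂)` is a bijection
`H × H ≅ (G × G × G)/(H × H* × H* × H*)`, and the orbit relation is an
equivalence relation. -/
theorem poisson_group_moduli_square_bijection
    {G : Type*} [Group G] (H Hs : Subgroup G)
    (hfact : Function.Bijective (fun p : Hs × H => (p.1 : G) * (p.2 : G))) :
    Equivalence (rel3 H Hs) ∧
      Function.Bijective
        (fun p : H × H =>
          Quot.mk (rel3 H Hs) ((1 : G), (p.1 : G), (p.1 : G) * (p.2 : G))) := by
  obtain ⟨hinj, hsurj⟩ := hfact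
  -- triviality of coincidences between Hs and H
  have triv : ∀ (s : Hs) (h : H), (s : G) = (h : G) → (s : G) = 1 ∧ (h : G) = 1 := by
    intro s h hsh
    have key : (s, (1 : H)) = ((1 : Hs), h) := by
      apply hinj
      simpa using hsh
    exact ⟨by simpa using congrArg (fun p => ((p.1 : Hs) : G)) key,
      by simpa using (congrArg (fun p => ((p.2 : H) : G)) key).symm⟩
  have heq : Equivalence (rel3 H Hs) := by
    constructor
    · intro x
      exact ⟨1, 1, 1, 1, by simp⟩
    · rintro ⟨x1, x2, x3⟩ y ⟨k, h₀, h₁, h₂, rfl⟩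
      refine ⟨k⁻¹, h₀⁻¹, h₁⁻¹, h₂⁻¹, ?_⟩
      simp only [Subgroup.coe_inv, inv_inv, Prod.mk.injEq]
      refine ⟨?_, ?_, ?_⟩ <;> group
    · rintro ⟨x1, x2, x3⟩ y z ⟨k, h₀, h₁, h₂, rfl⟩ ⟨k', h₀', h₁', h₂', rfl⟩
      refine ⟨k' * k, h₀' * h₀, h₁' * h₁, h₂' * h₂, ?_⟩
      simp only [Subgroup.coe_mul, mul_inv_rev, Prod.mk.injEq]
      refine ⟨?_, ?_, ?_⟩ <;> group
  refine ⟨heq, ?_, ?_⟩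
  · -- injectivity
    intro p q hpq
    have hrel : rel3 H Hs ((1 : G), (p.1 : G), (p.1 : G) * (p.2 : G))
        ((1 : G), (q.1 : G), (q.1 : G) * (q.2 : G)) :=
      heq.eqvGen_iff.mp (Quot.eq.mp hpq)
    obtain ⟨k, h₀, h₁, h₂, hx⟩ := hrel
    have e0 : (1 : G) = (k : G) * 1 * (h₀ : G)⁻¹ := congrArg Prod.fst hx
    have e1 : (q.1 : G) = (k : G) * (p.1 : G) * (h₁ : G)⁻¹ :=
      congrArg (fun t => t.2.1) hx
    have e2 : (q.1 : G) * (q.2 : G) = (k : G) * ((p.1 : G) * (p.2 : G)) * (h₂ : G)⁻¹ :=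
      congrArg (fun t => t.2.2) hx
    have hk0 : (h₀ : G) = (k : G) := by
      rw [mul_one] at e0
      rw [eq_comm, mul_inv_eq_one] at e0
      exact e0.symm
    have hk1 : (k : G) = 1 := (triv h₀ k hk0).2
    have hh1 : (h₁ : G) = ((q.1⁻¹ * p.1 : H) : G) := by
      push_cast
      rw [e1, hk1]
      group
    have hq1 : (q.1 : G) = (p.1 : G) := by
      have h1t := (triv h₁ (q.1⁻¹ * p.1) hh1).2
      push_cast at h1t
      rw [inv_mul_eq_one] at h1t
      exact h1t
    have hh2 : (h₂ : G) = (((q.1 * q.2)⁻¹ * (p.1 * p.2) : H) : G) := by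
      push_cast
      rw [e2, hk1]
      group
    have hq2 : (q.1 : G) * (q.2 : G) = (p.1 : G) * (p.2 : G) := by
      have h2t := (triv h₂ ((q.1 * q.2)⁻¹ * (p.1 * p.2)) hh2).2
      push_cast at h2t
      rw [inv_mul_eq_one] at h2t
      exact h2t
    have hq2' : (q.2 : G) = (p.2 : G) := by
      rw [hq1] at hq2
      exact mul_left_cancel hq2
    exact Prod.ext (Subtype.ext hq1.symm) (Subtype.ext hq2'.symm)
  · -- surjectivity
    intro qt
    obtain ⟨⟨g₀, g₁, g₂⟩, rfl⟩ := Quot.exists_rep qt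
    obtain ⟨⟨s, h⟩, hg₀⟩ := hsurj g₀⁻¹
    obtain ⟨⟨s₁, t₁⟩, hg₁⟩ := hsurj (g₁⁻¹ * (h : G)⁻¹)
    obtain ⟨⟨s₂, t₂⟩, hg₂⟩ := hsurj (g₂⁻¹ * (h : G)⁻¹)
    simp only at hg₀ hg₁ hg₂
    refine ⟨(t₁⁻¹, t₁ * t₂⁻¹), ?_⟩
    apply Quot.sound
    refine ⟨h⁻¹, s, s₁, s₂, ?_⟩
    have f0 : g₀ = ((s : G) * (h : G))⁻¹ := by rw [hg₀, inv_inv]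
    have f1 : g₁ = ((s₁ : G) * (t₁ : G) * (h : G))⁻¹ := by
      have key : (s₁ : G) * (t₁ : G) * (h : G) = g₁⁻¹ := by rw [hg₁]; group
      rw [key, inv_inv]
    have f2 : g₂ = ((s₂ : G) * (t₂ : G) * (h : G))⁻¹ := by
      have key : (s₂ : G) * (t₂ : G) * (h : G) = g₂⁻¹ := by rw [hg₂]; group
      rw [key, inv_inv]
    simp only [Prod.mk.injEq, Subgroup.coe_inv, Subgroup.coe_mul]
    refine ⟨?_, ?_, ?_⟩
    · rw [f0]; group
    · rw [f1]; group
    · rw [f2]; group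
end
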